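/- arXiv:1206.4927 — 2 statements merged into one kernel-verified Lean document; each statement's English description precedes it below -/
import Mathlib

section
/- There exists an optimal conditional machine; that is, there is a conditional machine U such that for every conditional machine V there is a constant d ∈ ℕ with C_U(x|y) ≤ C_V(x|y) + d for all strings x, y. -/
/-- A string is a finite binary string. -/
abbrev Str : Type := List Bool

/-- A conditional machine: a partial computable function mapping a pair of
strings `(p, y)` to a string. -/
abbrev CondMachine : Type := {V : Str × Str →. Str // Partrec V}

/-- `condC V x y` is `C_V(x|y)`: the least length of a program `p` with
`V (p, y) = x`, as an element of `ℕ∞` (it is `⊤` if no such `p` exists). -/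
noncomputable def condC (V : CondMachine) (x y : Str) : ℕ∞ :=
  sInf {n : ℕ∞ | ∃ p : Str, x ∈ V.1 (p, y) ∧ (p.length : ℕ∞) = n}

/-- A conditional machine `U` is optimal if for every conditional machine `V`
there is a constant `d` with `C_U(x|y) ≤ C_V(x|y) + d` for all `x, y`. -/
def OptimalMachine (U : CondMachine) : Prop :=
  ∀ V : CondMachine, ∃ d : ℕ, ∀ x y : Str, condC U x y ≤ condC V x y + (d : ℕ∞)

/-- For an optimal machine all complexities are finite natural numbers. -/
noncomputable def KC (U : CondMachine) (x y : Str) : ℕ := (condC U x y).toNat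

/-- `log2 n = Nat.log 2 (n + 2)`, so `log2 n ≥ 1`. -/
def log2 (n : ℕ) : ℕ := Nat.log 2 (n + 2)

/-!
A universal machine reads a program of the form `1^e 0 q`, interprets `e` as the index of a
partial recursive code and runs that code on `(q, y)`. Every machine `V` has some code `c`, so
any `V`-program `p` for `x` given `y` becomes the `U`-program `1^c 0 p`, which is only
`c + 1` bits longer.
-/

open Nat.Partrec (Code)

lemma condC_le_length {V : CondMachine} {x y p : Str} (h : x ∈ V.1 (p, y)) :
    condC V x y ≤ p.length :=
  sInf_le ⟨p, h, rfl⟩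

theorem condC_le_condC_add {U V : CondMachine} (f : Str → Str) (d : ℕ)
    (hsim : ∀ p y x, x ∈ V.1 (p, y) → x ∈ U.1 (f p, y))
    (hlen : ∀ p, (f p).length ≤ p.length + d) (x y : Str) :
    condC U x y ≤ condC V x y + d := by
  rw [condC.eq_1 V, ENat.sInf_add]
  refine le_iInf₂ fun _ ⟨p, hp, hn⟩ => hn ▸ ?_
  calc condC U x y ≤ (f p).length := condC_le_length (hsim p y x hp)
    _ ≤ p.length + d := mod_cast hlen p

/-- Reads a program `1^e 0 q` as `(e, q)`. -/
def splitUnary : Str → ℕ × Str := fun p =>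
  p.rec (0, []) fun b l ih => if b then (ih.1 + 1, ih.2) else (0, l)

lemma splitUnary_replicate_append (e : ℕ) (q : Str) :
    splitUnary (List.replicate e true ++ false :: q) = (e, q) := by
  induction e with
  | zero => rfl
  | succ n ih =>
    rw [List.replicate_succ, List.cons_append]
    exact congrArg (fun r : ℕ × Str => (r.1 + 1, r.2)) ih

lemma primrec_splitUnary : Primrec splitUnary := by
  have hstep : Primrec₂ fun (_ : Str) (x : Bool × Str × (ℕ × Str)) =>
      if x.1 then (x.2.2.1 + 1, x.2.2.2) else (0, x.2.1) := by
    refine Primrec.ite ?_ ?_ ?_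
    · exact PrimrecPred.comp (p := fun b : Bool => b = true)
        (Primrec.eq.comp Primrec.id (Primrec.const true)) (Primrec.fst.comp Primrec.snd)
    · have hih := Primrec.snd.comp (Primrec.snd.comp (Primrec.snd (α := Str)
        (β := Bool × Str × (ℕ × Str))))
      exact (Primrec.succ.comp (Primrec.fst.comp hih)).pair (Primrec.snd.comp hih)
    · exact (Primrec.const 0).pair (Primrec.fst.comp (Primrec.snd.comp Primrec.snd))
  exact Primrec.list_rec Primrec.id (Primrec.const (0, [])) hstep

def universalMachine : CondMachine where
  val a := ((Denumerable.ofNat Code (splitUnary a.1).1).eval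
      (Nat.pair (Encodable.encode (splitUnary a.1).2) (Encodable.encode a.2))).bind
    fun n => (Encodable.decode (α := Str) n : Part Str)
  property := by
    have hcode : Computable fun a : Str × Str => Denumerable.ofNat Code (splitUnary a.1).1 :=
      (Computable.ofNat Code).comp
        (Primrec.fst.comp (primrec_splitUnary.comp Primrec.fst)).to_comp
    have harg : Computable fun a : Str × Str =>
        Nat.pair (Encodable.encode (splitUnary a.1).2) (Encodable.encode a.2) :=
      (Primrec₂.natPair.comp
        (Primrec.encode.comp (Primrec.snd.comp (primrec_splitUnary.comp Primrec.fst)))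
        (Primrec.encode.comp Primrec.snd)).to_comp
    exact (Nat.Partrec.Code.eval_part.comp hcode harg).bind
      (Computable.ofOption (Computable.decode.comp Computable.snd))

lemma universalMachine_simulates (V : CondMachine) : ∃ c : Code, ∀ p y : Str,
    universalMachine.1 (List.replicate (Encodable.encode c) true ++ false :: p, y) =
      V.1 (p, y) := by
  obtain ⟨c, hc⟩ := Nat.Partrec.Code.exists_code.1 V.2
  refine ⟨c, fun p y => ?_⟩
  simp [universalMachine, splitUnary_replicate_append, Denumerable.ofNat_encode, hc,
    Encodable.encodek]

/-- There exists an optimal conditional machine. -/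
theorem exists_optimal_machine :
    ∃ U : CondMachine, ∀ V : CondMachine, ∃ d : ℕ,
      ∀ x y : Str, condC U x y ≤ condC V x y + (d : ℕ∞) := by
  refine ⟨universalMachine, fun V => ?_⟩
  obtain ⟨c, hc⟩ := universalMachine_simulates V
  refine ⟨Encodable.encode c + 1,
    condC_le_condC_add (fun p => List.replicate (Encodable.encode c) true ++ false :: p) _
      (fun p y x hx => (hc p y).symm ▸ hx) (fun p => ?_)⟩
  simp only [List.length_append, List.length_replicate, List.length_cons]
  omega
end

section
/- (Two-dimensional discrete covering lemma) Let c, D, M, N ∈ ℕ with M, N ≥ 1, and let f : R → ℤ² satisfy: (i) ‖f(p) − f(p')‖∞ ≤ c for all adjacent p, p' ∈ R; and (ii) ‖f(p) − p‖∞ ≤ D for all p ∈ ∂R. Then for every q ∈ R whose ℓ∞-distance to every point of ∂R is at least D + 1, there exists p ∈ R with ‖f(p) − q‖∞ ≤ 2c. -/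
/-- The ℓ∞ (Chebyshev) distance on `ℤ²`. -/
def chebDist2 (p q : ℤ × ℤ) : ℤ := max |p.1 - q.1| |p.2 - q.2|

/-- Two points of `ℤ²` are adjacent if they differ by exactly 1 in exactly one
coordinate. -/
def Adj2 (p q : ℤ × ℤ) : Prop :=
  (|p.1 - q.1| = 1 ∧ p.2 = q.2) ∨ (p.1 = q.1 ∧ |p.2 - q.2| = 1)

/-- The discrete rectangle `R = {0,…,M} × {0,…,N} ⊆ ℤ²`. -/
def Rect2 (M N : ℕ) : Set (ℤ × ℤ) :=
  {p | 0 ≤ p.1 ∧ p.1 ≤ (M : ℤ) ∧ 0 ≤ p.2 ∧ p.2 ≤ (N : ℤ)}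

/-- The boundary of the discrete rectangle. -/
def Bdry2 (M N : ℕ) : Set (ℤ × ℤ) :=
  {p ∈ Rect2 M N | p.1 = 0 ∨ p.1 = (M : ℤ) ∨ p.2 = 0 ∨ p.2 = (N : ℤ)}

/-- Cross product of two vectors in `ℤ²`. -/
def cross2 (u v : ℤ × ℤ) : ℤ := u.1 * v.2 - u.2 * v.1

/-- Signed crossing number of the segment from `u` to `v` over the ray
`{(x,0) : x < 0}`. -/
def chi2 (u v : ℤ × ℤ) : ℤ :=
  if u.2 < 0 ∧ 0 ≤ v.2 ∧ cross2 u v < 0 then 1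
  else if v.2 < 0 ∧ 0 ≤ u.2 ∧ 0 < cross2 u v then -1 else 0

lemma chi2_xpos {u v : ℤ × ℤ} (hu : 0 < u.1) (hv : 0 < v.1) : chi2 u v = 0 := by
  unfold chi2 cross2
  split_ifs with h1 h2
  · exfalso
    obtain ⟨a, b, hcr⟩ := h1
    nlinarith [mul_nonneg hu.le b, mul_pos (neg_pos.mpr a) hv]
  · exfalso
    obtain ⟨a, b, hcr⟩ := h2
    nlinarith [mul_nonneg b hv.le, mul_pos hu (neg_pos.mpr a)]
  · rfl

lemma chi2_xneg {u v : ℤ × ℤ} (hu : u.1 < 0) (hv : v.1 < 0) :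
    chi2 u v = (if 0 ≤ v.2 then (1:ℤ) else 0) - (if 0 ≤ u.2 then (1:ℤ) else 0) := by
  unfold chi2 cross2
  rcases lt_or_ge u.2 0 with hu2 | hu2 <;> rcases lt_or_ge v.2 0 with hv2 | hv2
  · rw [if_neg (fun h => absurd h.2.1 (not_le.mpr hv2)),
      if_neg (fun h => absurd h.2.1 (not_le.mpr hu2)),
      if_neg (not_le.mpr hv2), if_neg (not_le.mpr hu2)]
    norm_num
  · have hcr : u.1 * v.2 - u.2 * v.1 < 0 := by
      nlinarith [mul_nonneg (neg_nonneg.mpr hu.le) hv2, mul_pos (neg_pos.mpr hu2) (neg_pos.mpr hv)]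
    rw [if_pos ⟨hu2, hv2, hcr⟩, if_pos hv2, if_neg (not_le.mpr hu2)]
    norm_num
  · have hcr : 0 < u.1 * v.2 - u.2 * v.1 := by
      nlinarith [mul_pos (neg_pos.mpr hu) (neg_pos.mpr hv2), mul_nonneg hu2 (neg_nonneg.mpr hv.le)]
    rw [if_neg (fun h => absurd h.1 (not_lt.mpr hu2)), if_pos ⟨hv2, hu2, hcr⟩,
      if_neg (not_le.mpr hv2), if_pos hu2]
    norm_num
  · rw [if_neg (fun h => absurd h.1 (not_lt.mpr hu2)),
      if_neg (fun h => absurd h.1 (not_lt.mpr hv2)), if_pos hv2, if_pos hu2]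
    norm_num

lemma chi2_ynn {u v : ℤ × ℤ} (hu : 0 ≤ u.2) (hv : 0 ≤ v.2) : chi2 u v = 0 := by
  unfold chi2
  rw [if_neg (fun h => absurd h.1 (not_lt.mpr hu)),
    if_neg (fun h => absurd h.1 (not_lt.mpr hv))]

lemma chi2_yneg {u v : ℤ × ℤ} (hu : u.2 < 0) (hv : v.2 < 0) : chi2 u v = 0 := by
  unfold chi2
  rw [if_neg (fun h => absurd h.2.1 (not_le.mpr hv)),
    if_neg (fun h => absurd h.2.1 (not_le.mpr hu))]

/-- The winding contribution of one grid cell vanishes when the values at the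
four corners are large and close to each other. -/
lemma chi2_cell {c : ℤ} (hc : 0 ≤ c) {u0 u1 u2 u3 : ℤ × ℤ}
    (h0 : 2 * c + 1 ≤ max |u0.1| |u0.2|)
    (d1x : |u1.1 - u0.1| ≤ c) (d1y : |u1.2 - u0.2| ≤ c)
    (d2x : |u2.1 - u1.1| ≤ c) (d2y : |u2.2 - u1.2| ≤ c)
    (d3x : |u2.1 - u3.1| ≤ c) (d3y : |u2.2 - u3.2| ≤ c)
    (d4x : |u3.1 - u0.1| ≤ c) (d4y : |u3.2 - u0.2| ≤ c) :
    chi2 u0 u1 + chi2 u1 u2 - chi2 u3 u2 - chi2 u0 u3 = 0 := by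
  rw [abs_le] at d1x d1y d2x d2y d3x d3y d4x d4y
  rcases le_max_iff.mp h0 with h | h <;> rcases le_abs.mp h with h' | h'
  · have p0 : 0 < u0.1 := by linarith
    have p1 : 0 < u1.1 := by linarith [d1x.1]
    have p2 : 0 < u2.1 := by linarith [d1x.1, d2x.1]
    have p3 : 0 < u3.1 := by linarith [d4x.1]
    rw [chi2_xpos p0 p1, chi2_xpos p1 p2, chi2_xpos p3 p2, chi2_xpos p0 p3]
    norm_num
  · have p0 : u0.1 < 0 := by linarith
    have p1 : u1.1 < 0 := by linarith [d1x.2]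
    have p2 : u2.1 < 0 := by linarith [d1x.2, d2x.2]
    have p3 : u3.1 < 0 := by linarith [d4x.2]
    rw [chi2_xneg p0 p1, chi2_xneg p1 p2, chi2_xneg p3 p2, chi2_xneg p0 p3]
    ring
  · have p0 : 0 ≤ u0.2 := by linarith
    have p1 : 0 ≤ u1.2 := by linarith [d1y.1]
    have p2 : 0 ≤ u2.2 := by linarith [d1y.1, d2y.1]
    have p3 : 0 ≤ u3.2 := by linarith [d4y.1]
    rw [chi2_ynn p0 p1, chi2_ynn p1 p2, chi2_ynn p3 p2, chi2_ynn p0 p3]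
    norm_num
  · have p0 : u0.2 < 0 := by linarith
    have p1 : u1.2 < 0 := by linarith [d1y.2]
    have p2 : u2.2 < 0 := by linarith [d1y.2, d2y.2]
    have p3 : u3.2 < 0 := by linarith [d4y.2]
    rw [chi2_yneg p0 p1, chi2_yneg p1 p2, chi2_yneg p3 p2, chi2_yneg p0 p3]
    norm_num

/-- Two-dimensional discrete covering lemma: a map of the discrete rectangle to
`ℤ²` that moves adjacent points by at most `c` and is within `D` of the identity
on the boundary `2c`-covers every point whose distance to the boundary is at
least `D + 1`. -/
theorem discrete_covering_two (c D M N : ℕ) (hM : 1 ≤ M) (hN : 1 ≤ N)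
    (f : ℤ × ℤ → ℤ × ℤ)
    (hstep : ∀ p ∈ Rect2 M N, ∀ p' ∈ Rect2 M N, Adj2 p p' →
      chebDist2 (f p) (f p') ≤ (c : ℤ))
    (hbd : ∀ p ∈ Bdry2 M N, chebDist2 (f p) p ≤ (D : ℤ))
    (q : ℤ × ℤ) (hq : q ∈ Rect2 M N)
    (hqfar : ∀ p ∈ Bdry2 M N, (D : ℤ) + 1 ≤ chebDist2 q p) :
    ∃ p ∈ Rect2 M N, chebDist2 (f p) q ≤ 2 * (c : ℤ) := by
  classical
  by_contra hcon
  push_neg at hcon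
  obtain ⟨hq1, hq2, hq3, hq4⟩ := hq
  -- q is deep inside the rectangle
  have hqx1 : (D : ℤ) + 1 ≤ q.1 := by
    have hb : (((0:ℤ), q.2)) ∈ Bdry2 M N :=
      ⟨⟨le_refl 0, Int.natCast_nonneg M, hq3, hq4⟩, Or.inl rfl⟩
    have h := hqfar _ hb
    simp only [chebDist2] at h
    rcases le_max_iff.mp h with h' | h'
    · rcases le_abs.mp h' with h'' | h'' <;> omega
    · simp only [sub_self, abs_zero] at h'; omega
  have hqx2 : q.1 ≤ (M : ℤ) - ((D : ℤ) + 1) := by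
    have hb : (((M:ℤ), q.2)) ∈ Bdry2 M N :=
      ⟨⟨Int.natCast_nonneg M, le_refl _, hq3, hq4⟩, Or.inr (Or.inl rfl)⟩
    have h := hqfar _ hb
    simp only [chebDist2] at h
    rcases le_max_iff.mp h with h' | h'
    · rcases le_abs.mp h' with h'' | h'' <;> omega
    · simp only [sub_self, abs_zero] at h'; omega
  have hqy1 : (D : ℤ) + 1 ≤ q.2 := by
    have hb : ((q.1, (0:ℤ))) ∈ Bdry2 M N :=
      ⟨⟨hq1, hq2, le_refl 0, Int.natCast_nonneg N⟩, Or.inr (Or.inr (Or.inl rfl))⟩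
    have h := hqfar _ hb
    simp only [chebDist2] at h
    rcases le_max_iff.mp h with h' | h'
    · simp only [sub_self, abs_zero] at h'; omega
    · rcases le_abs.mp h' with h'' | h'' <;> omega
  have hqy2 : q.2 ≤ (N : ℤ) - ((D : ℤ) + 1) := by
    have hb : ((q.1, (N:ℤ))) ∈ Bdry2 M N :=
      ⟨⟨hq1, hq2, Int.natCast_nonneg N, le_refl _⟩, Or.inr (Or.inr (Or.inr rfl))⟩
    have h := hqfar _ hb
    simp only [chebDist2] at h
    rcases le_max_iff.mp h with h' | h'
    · simp only [sub_self, abs_zero] at h'; omega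
    · rcases le_abs.mp h' with h'' | h'' <;> omega
  -- the shifted map
  set G : ℕ → ℕ → ℤ × ℤ := fun i j => f ((i : ℤ), (j : ℤ)) - q with hG
  have hmem : ∀ i j : ℕ, i ≤ M → j ≤ N → (((i:ℤ), (j:ℤ))) ∈ Rect2 M N := by
    intro i j hi hj
    refine ⟨Int.natCast_nonneg i, ?_, Int.natCast_nonneg j, ?_⟩
    · show (i:ℤ) ≤ (M:ℤ); exact_mod_cast hi
    · show (j:ℤ) ≤ (N:ℤ); exact_mod_cast hj
  -- everywhere far from 0
  have hbig : ∀ i j : ℕ, i ≤ M → j ≤ N →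
      2 * (c : ℤ) + 1 ≤ max |(G i j).1| |(G i j).2| := by
    intro i j hi hj
    have h := hcon ((i:ℤ), (j:ℤ)) (hmem i j hi hj)
    simp only [chebDist2] at h
    simp only [hG, Prod.fst_sub, Prod.snd_sub]
    exact Int.add_one_le_iff.mpr h
  -- step bounds
  have hstepH : ∀ i j : ℕ, i < M → j ≤ N →
      |(G (i+1) j).1 - (G i j).1| ≤ (c:ℤ) ∧ |(G (i+1) j).2 - (G i j).2| ≤ (c:ℤ) := by
    intro i j hi hj
    have hp2 : (((i:ℤ)+1, (j:ℤ))) ∈ Rect2 M N := by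
      have := hmem (i+1) j hi hj
      push_cast at this
      exact this
    have hadj : Adj2 ((i:ℤ), (j:ℤ)) ((i:ℤ)+1, (j:ℤ)) := by
      refine Or.inl ⟨?_, rfl⟩
      show |(i:ℤ) - ((i:ℤ)+1)| = 1
      rw [show (i:ℤ) - ((i:ℤ)+1) = -1 by ring]
      norm_num
    have h := hstep _ (hmem i j hi.le hj) _ hp2 hadj
    simp only [chebDist2, max_le_iff, abs_le] at h
    obtain ⟨⟨h1, h2⟩, h3, h4⟩ := h
    simp only [hG, Prod.fst_sub, Prod.snd_sub, Nat.cast_add, Nat.cast_one]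
    refine ⟨abs_le.mpr ⟨by linarith, by linarith⟩, abs_le.mpr ⟨by linarith, by linarith⟩⟩
  have hstepV : ∀ i j : ℕ, i ≤ M → j < N →
      |(G i (j+1)).1 - (G i j).1| ≤ (c:ℤ) ∧ |(G i (j+1)).2 - (G i j).2| ≤ (c:ℤ) := by
    intro i j hi hj
    have hp2 : (((i:ℤ), (j:ℤ)+1)) ∈ Rect2 M N := by
      have := hmem i (j+1) hi hj
      push_cast at this
      exact this
    have hadj : Adj2 ((i:ℤ), (j:ℤ)) ((i:ℤ), (j:ℤ)+1) := by
      refine Or.inr ⟨rfl, ?_⟩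
      show |(j:ℤ) - ((j:ℤ)+1)| = 1
      rw [show (j:ℤ) - ((j:ℤ)+1) = -1 by ring]
      norm_num
    have h := hstep _ (hmem i j hi hj.le) _ hp2 hadj
    simp only [chebDist2, max_le_iff, abs_le] at h
    obtain ⟨⟨h1, h2⟩, h3, h4⟩ := h
    simp only [hG, Prod.fst_sub, Prod.snd_sub, Nat.cast_add, Nat.cast_one]
    refine ⟨abs_le.mpr ⟨by linarith, by linarith⟩, abs_le.mpr ⟨by linarith, by linarith⟩⟩
  -- boundary value facts
  have hleft : ∀ j : ℕ, j ≤ N → (G 0 j).1 ≤ -1 := by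
    intro j hj
    have hb : (((0:ℤ), (j:ℤ))) ∈ Bdry2 M N := ⟨hmem 0 j (Nat.zero_le M) hj, Or.inl rfl⟩
    have h := hbd _ hb
    simp only [chebDist2, max_le_iff, abs_le] at h
    simp only [hG, Prod.fst_sub, Nat.cast_zero]
    have := h.1.2
    omega
  have hright : ∀ j : ℕ, j ≤ N → 1 ≤ (G M j).1 := by
    intro j hj
    have hb : (((M:ℤ), (j:ℤ))) ∈ Bdry2 M N :=
      ⟨hmem M j (le_refl M) hj, Or.inr (Or.inl rfl)⟩
    have h := hbd _ hb
    simp only [chebDist2, max_le_iff, abs_le] at h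
    simp only [hG, Prod.fst_sub]
    have := h.1.1
    omega
  have hbot : ∀ i : ℕ, i ≤ M → (G i 0).2 ≤ -1 := by
    intro i hi
    have hb : (((i:ℤ), (0:ℤ))) ∈ Bdry2 M N :=
      ⟨hmem i 0 hi (Nat.zero_le N), Or.inr (Or.inr (Or.inl rfl))⟩
    have h := hbd _ hb
    simp only [chebDist2, max_le_iff, abs_le] at h
    simp only [hG, Prod.snd_sub, Nat.cast_zero]
    have := h.2.2
    omega
  have htop : ∀ i : ℕ, i ≤ M → 1 ≤ (G i N).2 := by
    intro i hi
    have hb : (((i:ℤ), (N:ℤ))) ∈ Bdry2 M N :=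
      ⟨hmem i N hi (le_refl N), Or.inr (Or.inr (Or.inr rfl))⟩
    have h := hbd _ hb
    simp only [chebDist2, max_le_iff, abs_le] at h
    simp only [hG, Prod.snd_sub]
    have := h.2.1
    omega
  -- edge winding contributions
  set A : ℕ → ℕ → ℤ := fun i j => chi2 (G i j) (G (i+1) j) with hA
  set B : ℕ → ℕ → ℤ := fun i j => chi2 (G i j) (G i (j+1)) with hB
  set E : ℕ → ℤ := fun j => if 0 ≤ (G 0 j).2 then (1:ℤ) else 0 with hE
  set H : ℕ → ℤ := fun j => ∑ i ∈ Finset.range M, A i j with hH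
  have hc0 : (0:ℤ) ≤ (c:ℤ) := Int.natCast_nonneg c
  -- cell identity
  have hcell : ∀ i j : ℕ, i < M → j < N →
      A i j + B (i+1) j - A i (j+1) - B i j = 0 := by
    intro i j hi hj
    simp only [hA, hB]
    exact chi2_cell hc0 (hbig i j hi.le hj.le)
      (hstepH i j hi hj.le).1 (hstepH i j hi hj.le).2
      (hstepV (i+1) j hi hj).1 (hstepV (i+1) j hi hj).2
      (hstepH i (j+1) hi hj).1 (hstepH i (j+1) hi hj).2
      (hstepV i j hi.le hj).1 (hstepV i j hi.le hj).2
  -- row identity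
  have hrow : ∀ j : ℕ, j < N → H (j+1) - H j = E j - E (j+1) := by
    intro j hj
    have hBM : B M j = 0 := by
      simp only [hB]
      exact chi2_xpos (by linarith [hright j hj.le]) (by linarith [hright (j+1) hj])
    have hB0 : B 0 j = E (j+1) - E j := by
      simp only [hB, hE]
      exact chi2_xneg (by linarith [hleft j hj.le]) (by linarith [hleft (j+1) hj])
    calc H (j+1) - H j
        = ∑ i ∈ Finset.range M, (A i (j+1) - A i j) := by
          simp only [hH]
          rw [Finset.sum_sub_distrib]
      _ = ∑ i ∈ Finset.range M, (B (i+1) j - B i j) := by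
          refine Finset.sum_congr rfl fun i hi => ?_
          have := hcell i j (Finset.mem_range.mp hi) hj
          linarith
      _ = B M j - B 0 j := Finset.sum_range_sub (fun i => B i j) M
      _ = E j - E (j+1) := by rw [hBM, hB0]; ring
  -- telescoping
  have t1 : H N - H 0 = ∑ j ∈ Finset.range N, (H (j+1) - H j) :=
    (Finset.sum_range_sub H N).symm
  have t2 : ∑ j ∈ Finset.range N, (H (j+1) - H j)
      = ∑ j ∈ Finset.range N, (E j - E (j+1)) :=
    Finset.sum_congr rfl fun j hj => hrow j (Finset.mem_range.mp hj)
  have t3 : ∑ j ∈ Finset.range N, (E j - E (j+1)) = E 0 - E N :=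
    Finset.sum_range_sub' E N
  have hH0 : H 0 = 0 := by
    simp only [hH]
    refine Finset.sum_eq_zero fun i hi => ?_
    have hi' := Finset.mem_range.mp hi
    simp only [hA]
    exact chi2_yneg (by linarith [hbot i hi'.le]) (by linarith [hbot (i+1) hi'])
  have hHN : H N = 0 := by
    simp only [hH]
    refine Finset.sum_eq_zero fun i hi => ?_
    have hi' := Finset.mem_range.mp hi
    simp only [hA]
    exact chi2_ynn (by linarith [htop i hi'.le]) (by linarith [htop (i+1) hi'])
  have hE0 : E 0 = 0 := by
    simp only [hE]
    rw [if_neg]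
    have := hbot 0 (Nat.zero_le M)
    omega
  have hEN : E N = 1 := by
    simp only [hE]
    rw [if_pos]
    linarith [htop 0 (Nat.zero_le M)]
  rw [t2, t3, hH0, hHN, hE0, hEN] at t1
  norm_num at t1
end
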